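/- Let m, m', d ∈ ℕ. Let K = [[Kyy, Kzyᵀ], [Kzy, Kzz]] ∈ ℝ^{(m+m')×(m+m')} be symmetric positive definite with Kyy ∈ ℝ^{m×m} symmetric positive definite, Kzz ∈ ℝ^{m'×m'} symmetric, and Kzy ∈ ℝ^{m'×m}, and write K⁻¹ = [[Wyy, Wyz], [Wzy, Wzz]]. Let y ∈ ℝ^m, define the estimate z̃ := Kzy Kyy⁻¹ y ∈ ℝ^{m'}, let D ∈ ℝ^{m'×d}, and let Γ ∈ ℝ^{d×d} be diagonal with strictly positive diagonal entries. Then: (1) −(Dᵀ Wzz D + Γᵀ Γ)⁻¹ Dᵀ Wzy y = (Dᵀ Wzz D + Γᵀ Γ)⁻¹ Dᵀ Wzz z̃; and (2) this common vector μ is the unique minimizer over η ∈ ℝ^d of the functional η ↦ ‖Dη − z̃‖²_{Wzz} + ‖Γη‖²₂. -/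

import Mathlib

/-!
Reading off the `(2,1)` block of `K⁻¹K = 1` gives `Wzy Kyy + Wzz Kzy = 0`, hence `Wzy y = -Wzz z̃`,
which identifies the two formulas for `μ`. The objective is a quadratic with Hessian
`A = DᵀWzz D + ΓᵀΓ`, and `μ` solves the normal equations `Aμ = DᵀWzz z̃`, so completing the square
gives `f η = f μ + (η - μ)ᵀA(η - μ)`. Finally `A ≻ 0`: `Wzz` is a diagonal block of `K⁻¹ ≻ 0` and
`ΓᵀΓ` is diagonal with positive entries.
-/

open Matrix

namespace Matrix

variable {l n α : Type*}

theorem PosSemidef.toBlocks₂₂ [Ring α] [PartialOrder α] [StarRing α]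
    {M : Matrix (l ⊕ n) (l ⊕ n) α} (hM : M.PosSemidef) : M.toBlocks₂₂.PosSemidef :=
  hM.submatrix Sum.inr

theorem inv_fromBlocks_toBlocks₂₁_eq [Fintype l] [Fintype n] [DecidableEq l] [DecidableEq n]
    [CommRing α] {A : Matrix l l α} {B : Matrix l n α} {C : Matrix n l α} {D : Matrix n n α}
    (hM : IsUnit (fromBlocks A B C D).det) (hA : IsUnit A.det) :
    (fromBlocks A B C D)⁻¹.toBlocks₂₁ = -((fromBlocks A B C D)⁻¹.toBlocks₂₂ * C * A⁻¹) := by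
  set N := (fromBlocks A B C D)⁻¹
  have hblock : N.toBlocks₂₁ * A + N.toBlocks₂₂ * C = 0 := by
    have h : (N * fromBlocks A B C D).toBlocks₂₁ = (1 : Matrix (l ⊕ n) (l ⊕ n) α).toBlocks₂₁ := by
      rw [nonsing_inv_mul _ hM]
    rwa [← fromBlocks_toBlocks N, fromBlocks_multiply, ← fromBlocks_one,
      toBlocks_fromBlocks₂₁, toBlocks_fromBlocks₂₁] at h
  calc N.toBlocks₂₁ = N.toBlocks₂₁ * A * A⁻¹ := by
        rw [Matrix.mul_assoc, mul_nonsing_inv A hA, Matrix.mul_one]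
    _ = -(N.toBlocks₂₂ * C * A⁻¹) := by
        rw [eq_neg_of_add_eq_zero_left hblock, Matrix.neg_mul]

theorem IsSymm.dotProduct_mulVec_comm [Fintype n] [CommRing α] {W : Matrix n n α}
    (hW : W.IsSymm) (u v : n → α) : u ⬝ᵥ (W *ᵥ v) = v ⬝ᵥ (W *ᵥ u) := by
  rw [← dotProduct_transpose_mulVec, hW.eq]

end Matrix

section Tikhonov

variable {ι κ ν R : Type*} [Fintype ι] [Fintype κ] [Fintype ν] [CommRing R]

def tikhonovObjective (W : Matrix ν ν R) (D : Matrix ν ι R) (G : Matrix κ ι R)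
    (z : ν → R) (η : ι → R) : R :=
  (D *ᵥ η - z) ⬝ᵥ (W *ᵥ (D *ᵥ η - z)) + (G *ᵥ η) ⬝ᵥ (G *ᵥ η)

theorem tikhonovObjective_eq_quadratic {W : Matrix ν ν R} (hW : W.IsSymm)
    (D : Matrix ν ι R) (G : Matrix κ ι R) (z : ν → R) (η : ι → R) :
    tikhonovObjective W D G z η
      = η ⬝ᵥ ((Dᵀ * W * D + Gᵀ * G) *ᵥ η) - 2 * (η ⬝ᵥ (Dᵀ *ᵥ (W *ᵥ z))) + z ⬝ᵥ (W *ᵥ z) := by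
  have hT (x : ι → R) (v : ν → R) : x ⬝ᵥ (Dᵀ *ᵥ v) = (D *ᵥ x) ⬝ᵥ v := by
    rw [dotProduct_mulVec, vecMul_transpose]
  have hDWD : η ⬝ᵥ ((Dᵀ * W * D) *ᵥ η) = (D *ᵥ η) ⬝ᵥ (W *ᵥ (D *ᵥ η)) := by
    rw [← mulVec_mulVec, ← mulVec_mulVec, hT]
  have hGG : η ⬝ᵥ ((Gᵀ * G) *ᵥ η) = (G *ᵥ η) ⬝ᵥ (G *ᵥ η) := by
    rw [← mulVec_mulVec, dotProduct_mulVec, vecMul_transpose]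
  rw [tikhonovObjective, add_mulVec, dotProduct_add, sub_dotProduct, mulVec_sub,
    dotProduct_sub, dotProduct_sub, hDWD, hGG, hT, hW.dotProduct_mulVec_comm z]
  ring

/-- Completing the square around a solution of the normal equations. -/
theorem tikhonovObjective_eq_add {W : Matrix ν ν R} (hW : W.IsSymm)
    {D : Matrix ν ι R} {G : Matrix κ ι R} {z : ν → R} {μ : ι → R}
    (hμ : (Dᵀ * W * D + Gᵀ * G) *ᵥ μ = Dᵀ *ᵥ (W *ᵥ z)) (η : ι → R) :
    tikhonovObjective W D G z η
      = tikhonovObjective W D G z μ + (η - μ) ⬝ᵥ ((Dᵀ * W * D + Gᵀ * G) *ᵥ (η - μ)) := by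
  set A := Dᵀ * W * D + Gᵀ * G
  have hA : A.IsSymm := by
    simp only [A, IsSymm, transpose_add, transpose_mul, transpose_transpose, hW.eq,
      Matrix.mul_assoc]
  rw [tikhonovObjective_eq_quadratic hW, tikhonovObjective_eq_quadratic hW, ← hμ, mulVec_sub,
    sub_dotProduct, dotProduct_sub, dotProduct_sub, hA.dotProduct_mulVec_comm μ η]
  ring

variable [LinearOrder R] [IsStrictOrderedRing R] [StarRing R] [TrivialStar R]

theorem tikhonovObjective_le {W : Matrix ν ν R} (hW : W.IsSymm) {D : Matrix ν ι R}
    {G : Matrix κ ι R} {z : ν → R} {μ : ι → R} (hA : (Dᵀ * W * D + Gᵀ * G).PosSemidef)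
    (hμ : (Dᵀ * W * D + Gᵀ * G) *ᵥ μ = Dᵀ *ᵥ (W *ᵥ z)) (η : ι → R) :
    tikhonovObjective W D G z μ ≤ tikhonovObjective W D G z η := by
  have hq := hA.dotProduct_mulVec_nonneg (η - μ)
  rw [star_trivial] at hq
  rw [tikhonovObjective_eq_add hW hμ η]
  exact le_add_of_nonneg_right hq

theorem eq_of_tikhonovObjective_eq {W : Matrix ν ν R} (hW : W.IsSymm) {D : Matrix ν ι R}
    {G : Matrix κ ι R} {z : ν → R} {μ η : ι → R} (hA : (Dᵀ * W * D + Gᵀ * G).PosDef)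
    (hμ : (Dᵀ * W * D + Gᵀ * G) *ᵥ μ = Dᵀ *ᵥ (W *ᵥ z))
    (h : tikhonovObjective W D G z η = tikhonovObjective W D G z μ) : η = μ := by
  by_contra hne
  have hq := hA.dotProduct_mulVec_pos (sub_ne_zero_of_ne hne)
  rw [star_trivial] at hq
  rw [tikhonovObjective_eq_add hW hμ η] at h
  linarith

end Tikhonov

theorem stmt_17_general (m m' d : ℕ)
    (Kyy : Matrix (Fin m) (Fin m) ℝ)
    (Kzy : Matrix (Fin m') (Fin m) ℝ)
    (Kzz : Matrix (Fin m') (Fin m') ℝ)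
    (hKyy : Kyy.PosDef)
    (hK : (Matrix.fromBlocks Kyy Kzyᵀ Kzy Kzz).PosDef)
    (Wzy : Matrix (Fin m') (Fin m) ℝ)
    (hWzy : Wzy = ((Matrix.fromBlocks Kyy Kzyᵀ Kzy Kzz)⁻¹).toBlocks₂₁)
    (Wzz : Matrix (Fin m') (Fin m') ℝ)
    (hWzz : Wzz = ((Matrix.fromBlocks Kyy Kzyᵀ Kzy Kzz)⁻¹).toBlocks₂₂)
    (y : Fin m → ℝ)
    (zt : Fin m' → ℝ) (hzt : zt = Kzy *ᵥ (Kyy⁻¹ *ᵥ y))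
    (D : Matrix (Fin m') (Fin d) ℝ)
    (γ : Fin d → ℝ) (hγ : ∀ i, 0 < γ i)
    (Γ : Matrix (Fin d) (Fin d) ℝ) (hΓ : Γ = Matrix.diagonal γ)
    (μ : Fin d → ℝ)
    (hμ : μ = -((Dᵀ * Wzz * D + Γᵀ * Γ)⁻¹ *ᵥ (Dᵀ *ᵥ (Wzy *ᵥ y)))) :
    μ = (Dᵀ * Wzz * D + Γᵀ * Γ)⁻¹ *ᵥ (Dᵀ *ᵥ (Wzz *ᵥ zt)) ∧
    ∀ η : Fin d → ℝ,
      ((D *ᵥ μ - zt) ⬝ᵥ (Wzz *ᵥ (D *ᵥ μ - zt)) + (Γ *ᵥ μ) ⬝ᵥ (Γ *ᵥ μ)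
          ≤ (D *ᵥ η - zt) ⬝ᵥ (Wzz *ᵥ (D *ᵥ η - zt)) + (Γ *ᵥ η) ⬝ᵥ (Γ *ᵥ η)) ∧
      ((D *ᵥ η - zt) ⬝ᵥ (Wzz *ᵥ (D *ᵥ η - zt)) + (Γ *ᵥ η) ⬝ᵥ (Γ *ᵥ η)
          = (D *ᵥ μ - zt) ⬝ᵥ (Wzz *ᵥ (D *ᵥ μ - zt)) + (Γ *ᵥ μ) ⬝ᵥ (Γ *ᵥ μ)
        → η = μ) := by
  have hWzz_psd : Wzz.PosSemidef := hWzz ▸ hK.posSemidef.inv.toBlocks₂₂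
  have hWzz_symm : Wzz.IsSymm := by simpa using hWzz_psd.isHermitian
  have hWzy_y : Wzy *ᵥ y = -(Wzz *ᵥ zt) := by
    rw [hWzy, hWzz, hzt, inv_fromBlocks_toBlocks₂₁_eq (isUnit_iff_isUnit_det _ |>.1 hK.isUnit)
      (isUnit_iff_isUnit_det _ |>.1 hKyy.isUnit), neg_mulVec, mulVec_mulVec, mulVec_mulVec]
  have hμ_eq : μ = (Dᵀ * Wzz * D + Γᵀ * Γ)⁻¹ *ᵥ (Dᵀ *ᵥ (Wzz *ᵥ zt)) := by
    rw [hμ, hWzy_y, mulVec_neg, mulVec_neg, neg_neg]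
  have hΓΓ : (Γᵀ * Γ).PosDef := by
    rw [hΓ, diagonal_transpose, diagonal_mul_diagonal, posDef_diagonal_iff]
    exact fun i => mul_pos (hγ i) (hγ i)
  have hA : (Dᵀ * Wzz * D + Γᵀ * Γ).PosDef :=
    .posSemidef_add (by simpa using hWzz_psd.conjTranspose_mul_mul_same D) hΓΓ
  have hnormal : (Dᵀ * Wzz * D + Γᵀ * Γ) *ᵥ μ = Dᵀ *ᵥ (Wzz *ᵥ zt) := by
    rw [hμ_eq, mulVec_mulVec, mul_nonsing_inv _ (isUnit_iff_isUnit_det _ |>.1 hA.isUnit),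
      one_mulVec]
  exact ⟨hμ_eq, fun η => ⟨tikhonovObjective_le hWzz_symm hA.posSemidef hnormal η,
    eq_of_tikhonovObjective_eq hWzz_symm hA hnormal⟩⟩

/-- The GP-BayesOpInf posterior mean `μ = −(DᵀWzz D + ΓᵀΓ)⁻¹ Dᵀ Wzy y`, where `Wzy`
and `Wzz` are the bottom blocks of the inverse of the symmetric positive definite
kernel matrix `K = [[Kyy, Kzyᵀ], [Kzy, Kzz]]`, equals
`(DᵀWzz D + ΓᵀΓ)⁻¹ Dᵀ Wzz z̃` with GP estimate `z̃ = Kzy Kyy⁻¹ y`, and is the unique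
minimizer of the Tikhonov-regularized generalized least-squares functional
`η ↦ ‖Dη − z̃‖²_{Wzz} + ‖Γη‖²₂`. -/
theorem stmt_17 (m m' d : ℕ)
    (Kyy : Matrix (Fin m) (Fin m) ℝ)
    (Kzy : Matrix (Fin m') (Fin m) ℝ)
    (Kzz : Matrix (Fin m') (Fin m') ℝ)
    (hKyy : Kyy.PosDef)
    (hKzz : Kzz.IsSymm)
    (hK : (Matrix.fromBlocks Kyy Kzyᵀ Kzy Kzz).PosDef)
    (Wzy : Matrix (Fin m') (Fin m) ℝ)
    (hWzy : Wzy = ((Matrix.fromBlocks Kyy Kzyᵀ Kzy Kzz)⁻¹).toBlocks₂₁)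
    (Wzz : Matrix (Fin m') (Fin m') ℝ)
    (hWzz : Wzz = ((Matrix.fromBlocks Kyy Kzyᵀ Kzy Kzz)⁻¹).toBlocks₂₂)
    (y : Fin m → ℝ)
    (zt : Fin m' → ℝ) (hzt : zt = Kzy *ᵥ (Kyy⁻¹ *ᵥ y))
    (D : Matrix (Fin m') (Fin d) ℝ)
    (γ : Fin d → ℝ) (hγ : ∀ i, 0 < γ i)
    (Γ : Matrix (Fin d) (Fin d) ℝ) (hΓ : Γ = Matrix.diagonal γ)
    (μ : Fin d → ℝ)
    (hμ : μ = -((Dᵀ * Wzz * D + Γᵀ * Γ)⁻¹ *ᵥ (Dᵀ *ᵥ (Wzy *ᵥ y)))) :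
    μ = (Dᵀ * Wzz * D + Γᵀ * Γ)⁻¹ *ᵥ (Dᵀ *ᵥ (Wzz *ᵥ zt)) ∧
    ∀ η : Fin d → ℝ,
      ((D *ᵥ μ - zt) ⬝ᵥ (Wzz *ᵥ (D *ᵥ μ - zt)) + (Γ *ᵥ μ) ⬝ᵥ (Γ *ᵥ μ)
          ≤ (D *ᵥ η - zt) ⬝ᵥ (Wzz *ᵥ (D *ᵥ η - zt)) + (Γ *ᵥ η) ⬝ᵥ (Γ *ᵥ η)) ∧
      ((D *ᵥ η - zt) ⬝ᵥ (Wzz *ᵥ (D *ᵥ η - zt)) + (Γ *ᵥ η) ⬝ᵥ (Γ *ᵥ η)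
          = (D *ᵥ μ - zt) ⬝ᵥ (Wzz *ᵥ (D *ᵥ μ - zt)) + (Γ *ᵥ μ) ⬝ᵥ (Γ *ᵥ μ)
        → η = μ) :=
  stmt_17_general m m' d Kyy Kzy Kzz hKyy hK Wzy hWzy Wzz hWzz y zt hzt D γ hγ Γ hΓ μ hμ
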